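/- With notation as above, write u_ℓ = H_ℓℓ^{-1/2} g_ℓ and C_ℓ = √κ_ℓ · ‖H_RR^{-1/2} g_R‖₂, and s_ℓ = max(‖u_ℓ‖₂ - C_ℓ, 0). Then Q^{(-ℓ)} - Q* ≥ ½ s_ℓ². -/

import Mathlib

open Matrix MeasureTheory BigOperators
noncomputable section

/-- Euclidean (spectral / operator) norm of a real square matrix. -/
def opN {n : Type*} [Fintype n] [DecidableEq n] (A : Matrix n n ℝ) : ℝ :=
  ‖Matrix.toEuclideanCLM (𝕜 := ℝ) A‖

/-- The positive semidefinite square root of a positive semidefinite matrix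
(removed from Mathlib; restored with its former definition). -/
noncomputable def Matrix.PosSemidef.sqrt {n 𝕜 : Type*} [Fintype n] [DecidableEq n] [RCLike 𝕜]
    [PartialOrder 𝕜] [StarOrderedRing 𝕜]
    {A : Matrix n n 𝕜} (hA : A.PosSemidef) : Matrix n n 𝕜 :=
  hA.isHermitian.eigenvectorUnitary.1 * diagonal ((↑) ∘ (√·) ∘ hA.isHermitian.eigenvalues) *
  (star hA.isHermitian.eigenvectorUnitary : Matrix n n 𝕜)

/-- Euclidean norm of a vector. -/
def vN {n : Type*} [Fintype n] (v : n → ℝ) : ℝ := Real.sqrt (∑ i, v i ^ 2)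

/-- Operator norm of a rectangular real matrix. -/
def opNR {m n : Type*} [Fintype m] [Fintype n] [DecidableEq n] (A : Matrix m n ℝ) : ℝ :=
  ‖LinearMap.toContinuousLinearMap (Matrix.toEuclideanLin A)‖

/-!
From any point `(0, y)` of the frozen problem, move `θ_ℓ` by `-a` and let `θ_R` compensate by
`HRR⁻¹ HRℓ a`. With `d = g_ℓ - HℓR HRR⁻¹ g_R` and `a = Hℓℓ⁻¹ d` this lowers `Q` by at least
`½ dᵀ Hℓℓ⁻¹ d = ½ ‖w‖²`, where `w = Hℓℓ^{-1/2} d = u - B (HRR^{-1/2} g_R)`. The triangle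
inequality and `‖B‖ = √κ` give `‖w‖ ≥ s`.
-/

section EuclideanNorm

variable {m n : Type*} [Fintype m] [Fintype n]

lemma vN_eq_norm (v : n → ℝ) : vN v = ‖WithLp.toLp 2 v‖ := by
  simp [vN, EuclideanSpace.norm_eq, Real.norm_eq_abs, sq_abs]

lemma vN_nonneg (v : n → ℝ) : 0 ≤ vN v := Real.sqrt_nonneg _

lemma vN_sq (v : n → ℝ) : vN v ^ 2 = v ⬝ᵥ v := by
  rw [vN, Real.sq_sqrt (by positivity)]
  simp [dotProduct, sq]

lemma vN_sub_vN_le (u v : n → ℝ) : vN u - vN v ≤ vN (u - v) := by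
  simpa only [vN_eq_norm, WithLp.toLp_sub] using norm_sub_norm_le _ _

lemma opNR_nonneg [DecidableEq n] (A : Matrix m n ℝ) : 0 ≤ opNR A := norm_nonneg _

lemma vN_mulVec_le [DecidableEq n] (A : Matrix m n ℝ) (v : n → ℝ) :
    vN (A *ᵥ v) ≤ opNR A * vN v := by
  simpa [vN_eq_norm, opNR] using
    (LinearMap.toContinuousLinearMap (toEuclideanLin A)).le_opNorm (WithLp.toLp 2 v)

lemma vN_sub_opNR_mul_le [DecidableEq n] (u : m → ℝ) (A : Matrix m n ℝ) (v : n → ℝ) :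
    vN u - opNR A * vN v ≤ vN (u - A *ᵥ v) :=
  (sub_le_sub_left (vN_mulVec_le A v) _).trans (vN_sub_vN_le u _)

end EuclideanNorm

lemma Matrix.IsSymm.dotProduct_mulVec_comm {n R : Type*} [Fintype n] [CommSemiring R]
    {A : Matrix n n R} (hA : A.IsSymm) (x y : n → R) : x ⬝ᵥ (A *ᵥ y) = (A *ᵥ x) ⬝ᵥ y := by
  rw [dotProduct_mulVec, ← mulVec_transpose, hA.eq]

namespace Matrix.PosSemidef

variable {n : Type*} [Fintype n] [DecidableEq n] {A : Matrix n n ℝ}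

lemma sqrt_mul_self (hA : A.PosSemidef) : hA.sqrt * hA.sqrt = A := by
  have hU : (star hA.isHermitian.eigenvectorUnitary : Matrix n n ℝ) *
      hA.isHermitian.eigenvectorUnitary.1 = 1 := Unitary.coe_star_mul_self _
  conv_rhs => rw [hA.isHermitian.spectral_theorem, Unitary.conjStarAlgAut_apply]
  rw [PosSemidef.sqrt]
  simp only [Matrix.mul_assoc]
  rw [← Matrix.mul_assoc (star _ : Matrix n n ℝ) _ _, hU, Matrix.one_mul,
    ← Matrix.mul_assoc (diagonal _) (diagonal _), diagonal_mul_diagonal]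
  congr 3
  funext i
  simp [Real.mul_self_sqrt (hA.eigenvalues_nonneg i)]

lemma isSymm_sqrt (hA : A.PosSemidef) : hA.sqrt.IsSymm := by
  rw [← isHermitian_iff_isSymm, PosSemidef.sqrt, star_eq_conjTranspose]
  refine (PosSemidef.mul_mul_conjTranspose_same ?_ _).isHermitian
  exact posSemidef_diagonal_iff.mpr fun i ↦ by simp

end Matrix.PosSemidef

namespace Matrix.PosDef

variable {n : Type*} [Fintype n] [DecidableEq n] {A : Matrix n n ℝ}

lemma inv_eq_sqrt_inv_mul_sqrt_inv (hA : A.PosDef) :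
    A⁻¹ = hA.posSemidef.sqrt⁻¹ * hA.posSemidef.sqrt⁻¹ := by
  rw [← Matrix.mul_inv_rev, hA.posSemidef.sqrt_mul_self]

lemma dotProduct_inv_mulVec_eq_vN_sq (hA : A.PosDef) (d : n → ℝ) :
    d ⬝ᵥ (A⁻¹ *ᵥ d) = vN (hA.posSemidef.sqrt⁻¹ *ᵥ d) ^ 2 := by
  rw [vN_sq, hA.inv_eq_sqrt_inv_mul_sqrt_inv, ← mulVec_mulVec,
    hA.posSemidef.isSymm_sqrt.inv.dotProduct_mulVec_comm]

end Matrix.PosDef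

def quadratic {n : Type*} [Fintype n] (c : ℝ) (g : n → ℝ) (H : Matrix n n ℝ) (θ : n → ℝ) : ℝ :=
  c + g ⬝ᵥ θ + 1 / 2 * (θ ⬝ᵥ (H *ᵥ θ))

lemma quadratic_add {n : Type*} [Fintype n] {H : Matrix n n ℝ} (hH : H.IsSymm)
    (c : ℝ) (g θ δ : n → ℝ) :
    quadratic c g H (θ + δ) =
      quadratic c g H θ + g ⬝ᵥ δ + θ ⬝ᵥ (H *ᵥ δ) + 1 / 2 * (δ ⬝ᵥ (H *ᵥ δ)) := by
  simp only [quadratic, mulVec_add, dotProduct_add, add_dotProduct,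
    hH.dotProduct_mulVec_comm δ θ, dotProduct_comm (H *ᵥ δ) θ]
  ring

section CompensatingStep

variable {l r : Type*} [Fintype l] [Fintype r] [DecidableEq r]
  {Hll : Matrix l l ℝ} (HlR : Matrix l r ℝ) {HRR : Matrix r r ℝ}

/-- Since `H δ` vanishes on the `R`-block, the step `δ` has no cross term with any `(0, y)`. -/
lemma fromBlocks_mulVec_compensate (hRR : IsUnit HRR.det) (a : l → ℝ) :
    fromBlocks Hll HlR HlRᵀ HRR *ᵥ Sum.elim (-a) (HRR⁻¹ *ᵥ (HlRᵀ *ᵥ a)) =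
      Sum.elim (HlR *ᵥ (HRR⁻¹ *ᵥ (HlRᵀ *ᵥ a)) - Hll *ᵥ a) 0 := by
  have hcancel : HRR *ᵥ (HRR⁻¹ *ᵥ (HlRᵀ *ᵥ a)) = HlRᵀ *ᵥ a := by
    rw [mulVec_mulVec, mul_nonsing_inv _ hRR, one_mulVec]
  rw [fromBlocks_mulVec, Sum.elim_comp_inl, Sum.elim_comp_inr, hcancel, mulVec_neg, mulVec_neg,
    neg_add_cancel, neg_add_eq_sub]

lemma quadratic_fromBlocks_compensate_le (hll : Hll.IsSymm) (hRR : HRR.PosDef)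
    (c : ℝ) (gl : l → ℝ) (gR y : r → ℝ) (a : l → ℝ) :
    quadratic c (Sum.elim gl gR) (fromBlocks Hll HlR HlRᵀ HRR)
        (Sum.elim (0 : l → ℝ) y + Sum.elim (-a) (HRR⁻¹ *ᵥ (HlRᵀ *ᵥ a))) ≤
      quadratic c (Sum.elim gl gR) (fromBlocks Hll HlR HlRᵀ HRR) (Sum.elim (0 : l → ℝ) y) -
        (gl - HlR *ᵥ (HRR⁻¹ *ᵥ gR)) ⬝ᵥ a + 1 / 2 * (a ⬝ᵥ (Hll *ᵥ a)) := by
  have hsymm : (fromBlocks Hll HlR HlRᵀ HRR).IsSymm :=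
    .fromBlocks hll rfl (isHermitian_iff_isSymm.mp hRR.isHermitian)
  have hRRinv : HRR⁻¹.IsSymm := (isHermitian_iff_isSymm.mp hRR.isHermitian).inv
  have hcross : gR ⬝ᵥ (HRR⁻¹ *ᵥ (HlRᵀ *ᵥ a)) = (HlR *ᵥ (HRR⁻¹ *ᵥ gR)) ⬝ᵥ a := by
    rw [hRRinv.dotProduct_mulVec_comm, dotProduct_mulVec, ← mulVec_transpose, transpose_transpose]
  have hnonneg : 0 ≤ a ⬝ᵥ (HlR *ᵥ (HRR⁻¹ *ᵥ (HlRᵀ *ᵥ a))) := by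
    rw [dotProduct_mulVec, ← mulVec_transpose]
    exact hRR.inv.posSemidef.dotProduct_mulVec_nonneg _
  rw [quadratic_add hsymm, fromBlocks_mulVec_compensate HlR hRR.det_pos.ne'.isUnit a]
  simp only [sumElim_dotProduct_sumElim, dotProduct_zero, zero_dotProduct, neg_dotProduct,
    dotProduct_neg, dotProduct_sub, sub_dotProduct, hcross]
  nlinarith

end CompensatingStep

lemma exists_quadratic_fromBlocks_le_sub {l r : Type*} [Fintype l] [DecidableEq l] [Fintype r]
    [DecidableEq r] {Hll : Matrix l l ℝ} (HlR : Matrix l r ℝ) {HRR : Matrix r r ℝ}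
    (hll : Hll.PosDef) (hRR : HRR.PosDef) (c : ℝ) (gl : l → ℝ) (gR y : r → ℝ) :
    ∃ θ, quadratic c (Sum.elim gl gR) (fromBlocks Hll HlR HlRᵀ HRR) θ ≤
      quadratic c (Sum.elim gl gR) (fromBlocks Hll HlR HlRᵀ HRR) (Sum.elim 0 y) -
        1 / 2 * vN (hll.posSemidef.sqrt⁻¹ *ᵥ (gl - HlR *ᵥ (HRR⁻¹ *ᵥ gR))) ^ 2 := by
  set d := gl - HlR *ᵥ (HRR⁻¹ *ᵥ gR)
  have hcancel : Hll *ᵥ (Hll⁻¹ *ᵥ d) = d := by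
    rw [mulVec_mulVec, mul_nonsing_inv _ hll.det_pos.ne'.isUnit, one_mulVec]
  refine ⟨_, (quadratic_fromBlocks_compensate_le HlR (isHermitian_iff_isSymm.mp hll.isHermitian)
    hRR c gl gR y (Hll⁻¹ *ᵥ d)).trans_eq ?_⟩
  rw [hcancel, ← hll.dotProduct_inv_mulVec_eq_vN_sq, dotProduct_comm (Hll⁻¹ *ᵥ d) d]
  ring

theorem freezing_penalty_lower_bound_general
    {l r : Type*} [Fintype l] [DecidableEq l] [Fintype r] [DecidableEq r]
    (Hll : Matrix l l ℝ) (HlR : Matrix l r ℝ) (HRl : Matrix r l ℝ) (HRR : Matrix r r ℝ)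
    (hH : (Matrix.fromBlocks Hll HlR HRl HRR).PosDef)
    (hll : Hll.PosDef) (hRR : HRR.PosDef)
    (gl : l → ℝ) (gR : r → ℝ) (Q0 : ℝ)
    (Q : (l ⊕ r → ℝ) → ℝ)
    (hQ : ∀ θ, Q θ = Q0 + (Sum.elim gl gR) ⬝ᵥ θ +
      (1/2) * (θ ⬝ᵥ ((Matrix.fromBlocks Hll HlR HRl HRR) *ᵥ θ)))
    (B : Matrix l r ℝ) (hB : B = (hll.posSemidef.sqrt)⁻¹ * HlR * (hRR.posSemidef.sqrt)⁻¹)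
    (κ : ℝ) (hκ : κ = opNR B ^ 2)
    (u : l → ℝ) (hu : u = (hll.posSemidef.sqrt)⁻¹ *ᵥ gl)
    (C s : ℝ) (hC : C = Real.sqrt κ * vN ((hRR.posSemidef.sqrt)⁻¹ *ᵥ gR))
    (hs : s = max (vN u - C) 0)
    (Qstar Qminus : ℝ)
    (hstar : IsLeast (Set.range Q) Qstar)
    (hminus : IsLeast (Set.range fun θR : r → ℝ => Q (Sum.elim 0 θR)) Qminus) :
    Qminus - Qstar ≥ (1/2) * s ^ 2 := by
  obtain ⟨-, hRl, -, -⟩ := isSymm_fromBlocks_iff.mp (isHermitian_iff_isSymm.mp hH.isHermitian)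
  subst hRl
  have hQ' : Q = quadratic Q0 (Sum.elim gl gR) (fromBlocks Hll HlR HlRᵀ HRR) := funext hQ
  obtain ⟨y, rfl⟩ := hminus.1
  obtain ⟨θ, hθ⟩ := exists_quadratic_fromBlocks_le_sub HlR hll hRR Q0 gl gR y
  have hw : hll.posSemidef.sqrt⁻¹ *ᵥ (gl - HlR *ᵥ (HRR⁻¹ *ᵥ gR)) =
      u - B *ᵥ (hRR.posSemidef.sqrt⁻¹ *ᵥ gR) := by
    rw [hu, hB, hRR.inv_eq_sqrt_inv_mul_sqrt_inv, mulVec_sub]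
    simp only [mulVec_mulVec, Matrix.mul_assoc]
  rw [hw] at hθ
  set w := u - B *ᵥ (hRR.posSemidef.sqrt⁻¹ *ᵥ gR)
  have hsw : s ≤ vN w := by
    rw [hs, hC, hκ, Real.sqrt_sq (opNR_nonneg B)]
    exact max_le (vN_sub_opNR_mul_le _ _ _) (vN_nonneg _)
  have hsq : s ^ 2 ≤ vN w ^ 2 := pow_le_pow_left₀ (hs ▸ le_max_right _ _) hsw 2
  have hQstar : Qstar ≤ Q θ := hstar.2 ⟨θ, rfl⟩
  rw [hQ'] at hQstar ⊢
  linarith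

/-- with `u = Hll^{-1/2}g_ℓ`, `C = √κ‖HRR^{-1/2}g_R‖₂`,
`s = (‖u‖₂ - C)₊`, the freezing penalty satisfies `Q^{(-ℓ)} - Q* ≥ ½s²`. -/
theorem freezing_penalty_lower_bound
    {l r : Type*} [Fintype l] [DecidableEq l] [Fintype r] [DecidableEq r]
    (Hll : Matrix l l ℝ) (HlR : Matrix l r ℝ) (HRl : Matrix r l ℝ) (HRR : Matrix r r ℝ)
    (hH : (Matrix.fromBlocks Hll HlR HRl HRR).PosDef)
    (hll : Hll.PosDef) (hRR : HRR.PosDef)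
    (gl : l → ℝ) (gR : r → ℝ) (Q0 : ℝ)
    (Q : (l ⊕ r → ℝ) → ℝ)
    (hQ : ∀ θ, Q θ = Q0 + (Sum.elim gl gR) ⬝ᵥ θ +
      (1/2) * (θ ⬝ᵥ ((Matrix.fromBlocks Hll HlR HRl HRR) *ᵥ θ)))
    (B : Matrix l r ℝ) (hB : B = (hll.posSemidef.sqrt)⁻¹ * HlR * (hRR.posSemidef.sqrt)⁻¹)
    (κ : ℝ) (hκ : κ = opNR B ^ 2) (hκ1 : κ < 1)
    (u : l → ℝ) (hu : u = (hll.posSemidef.sqrt)⁻¹ *ᵥ gl)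
    (C s : ℝ) (hC : C = Real.sqrt κ * vN ((hRR.posSemidef.sqrt)⁻¹ *ᵥ gR))
    (hs : s = max (vN u - C) 0)
    (Qstar Qminus : ℝ)
    (hstar : IsLeast (Set.range Q) Qstar)
    (hminus : IsLeast (Set.range fun θR : r → ℝ => Q (Sum.elim 0 θR)) Qminus) :
    Qminus - Qstar ≥ (1/2) * s ^ 2 :=
  freezing_penalty_lower_bound_general Hll HlR HRl HRR hH hll hRR gl gR Q0 Q hQ B hB κ hκ u hu C s
    hC hs Qstar Qminus hstar hminus
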